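/- arXiv:1701.02835 — 4 statements merged into one kernel-verified Lean document; each statement's English description precedes it below -/
import Mathlib

section
/- Let V be a subspace of C^n, x a nonzero vector, v a unit vector orthogonal to V, and V' = V + span{v}. Let x_⊥ = (I - P_V)x and assume x_⊥ ≠ 0 and sin∠(v, x_⊥) ≠ 0 (where the angle between two nonzero vectors u, w satisfies cos∠(u,w) = |u* w|/(||u|| ||w||)). Then sin∠(V', x) = sin∠(V, x) · sin∠(v, x_⊥). -/
/-!
Since `span {v} ⟂ V`, the residual of `x` against `V ⊔ span {v}` is the residual of
`x_⊥ = x - P_V x` against `span {v}`. Hence `sin∠(V', x)` factors as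
`(‖x_⊥‖ / ‖x‖) · (‖x_⊥ - P_v x_⊥‖ / ‖x_⊥‖)`, and by Pythagoras the second factor is
`sqrt (1 - cos²∠(v, x_⊥))`.
-/

noncomputable def sinV {n : ℕ} (V : Submodule ℂ (EuclideanSpace ℂ (Fin n)))
    (x : EuclideanSpace ℂ (Fin n)) : ℝ :=
  ‖x - (Submodule.orthogonalProjection V x : EuclideanSpace ℂ (Fin n))‖ / ‖x‖

/-- Sine of the angle between two nonzero vectors, via
`cos∠(u,w) = |⟪u,w⟫| / (‖u‖ ‖w‖)` and `sin = sqrt (1 - cos²)`. -/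
noncomputable def sinA {n : ℕ} (u w : EuclideanSpace ℂ (Fin n)) : ℝ :=
  Real.sqrt (1 - ‖(inner ℂ u w : ℂ)‖ ^ 2 / (‖u‖ ^ 2 * ‖w‖ ^ 2))

open scoped InnerProductSpace

namespace Submodule

variable {𝕜 E : Type*} [RCLike 𝕜] [NormedAddCommGroup E] [InnerProductSpace 𝕜 E]

theorem sub_starProjection_sup_of_isOrtho {K L : Submodule 𝕜 E} [K.HasOrthogonalProjection]
    [L.HasOrthogonalProjection] [(K ⊔ L).HasOrthogonalProjection] (hLK : L ⟂ K) (x : E) :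
    x - (K ⊔ L).starProjection x
      = (x - K.starProjection x) - L.starProjection (x - K.starProjection x) := by
  set w := x - K.starProjection x
  have hproj : (K ⊔ L).starProjection x = K.starProjection x + L.starProjection w := by
    refine eq_starProjection_of_mem_orthogonal
      (add_mem (mem_sup_left (K.starProjection_apply_mem x))
        (mem_sup_right (L.starProjection_apply_mem w))) ?_
    rw [← inf_orthogonal, mem_inf, sub_add_eq_sub_sub]
    exact ⟨sub_mem (K.sub_starProjection_mem_orthogonal x) (hLK (L.starProjection_apply_mem w)),
      L.sub_starProjection_mem_orthogonal w⟩
  rw [hproj, sub_add_eq_sub_sub]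

theorem norm_starProjection_singleton (u w : E) :
    ‖(𝕜 ∙ u).starProjection w‖ = ‖⟪u, w⟫_𝕜‖ / ‖u‖ := by
  rcases eq_or_ne u 0 with rfl | hu
  · simp
  rw [starProjection_singleton, norm_smul, norm_div, RCLike.norm_ofReal, abs_sq]
  field_simp [norm_ne_zero_iff.mpr hu]

end Submodule

open Submodule

section

variable {n : ℕ}

theorem sinV_def (K : Submodule ℂ (EuclideanSpace ℂ (Fin n))) (x : EuclideanSpace ℂ (Fin n)) :
    sinV K x = ‖x - K.starProjection x‖ / ‖x‖ := rfl

theorem sinV_sup_of_isOrtho {K L : Submodule ℂ (EuclideanSpace ℂ (Fin n))} (hLK : L ⟂ K)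
    (x : EuclideanSpace ℂ (Fin n)) :
    sinV (K ⊔ L) x = sinV K x * sinV L (x - K.starProjection x) := by
  simp only [sinV_def, sub_starProjection_sup_of_isOrtho hLK]
  rcases eq_or_ne (x - K.starProjection x) 0 with hw | hw
  · simp [hw]
  · field_simp [norm_ne_zero_iff.mpr hw]

theorem sinA_eq_sinV_span_singleton (u : EuclideanSpace ℂ (Fin n))
    {w : EuclideanSpace ℂ (Fin n)} (hw : w ≠ 0) : sinA u w = sinV (ℂ ∙ u) w := by
  have hw' : ‖w‖ ≠ 0 := norm_ne_zero_iff.mpr hw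
  have pythagoras := norm_sq_eq_add_norm_sq_starProjection w (ℂ ∙ u)
  rw [starProjection_orthogonal_val, norm_starProjection_singleton] at pythagoras
  have cos_sq : ‖⟪u, w⟫_ℂ‖ ^ 2 / (‖u‖ ^ 2 * ‖w‖ ^ 2)
      = 1 - (‖w - (ℂ ∙ u).starProjection w‖ / ‖w‖) ^ 2 := by
    rw [← div_div, ← div_pow, div_pow _ ‖w‖, eq_sub_iff_add_eq, ← add_div, ← pythagoras,
      div_self (pow_ne_zero 2 hw')]
  rw [sinA, cos_sq, sub_sub_cancel, Real.sqrt_sq (by positivity), sinV_def]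

end

theorem stmt1_general {n : ℕ} (V : Submodule ℂ (EuclideanSpace ℂ (Fin n)))
    (x v : EuclideanSpace ℂ (Fin n))
    (hvV : v ∈ Vᗮ) :
    sinV (V ⊔ Submodule.span ℂ {v}) x
      = sinV V x * sinA v (x - (Submodule.orthogonalProjection V x : EuclideanSpace ℂ (Fin n))) := by
  have hvV' : (ℂ ∙ v) ⟂ V := (span_singleton_le_iff_mem v _).mpr hvV
  rw [sinV_sup_of_isOrtho hvV']
  rcases eq_or_ne (x - V.starProjection x) 0 with hw | hw
  · simp [sinV_def, hw]
  · rw [← sinA_eq_sinV_span_singleton v hw]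
    -- the coercion of `orthogonalProjection` unfolds to `starProjection`
    rfl

theorem stmt1 {n : ℕ} (V : Submodule ℂ (EuclideanSpace ℂ (Fin n)))
    (x v : EuclideanSpace ℂ (Fin n)) (hx : x ≠ 0) (hv : ‖v‖ = 1)
    (hvV : v ∈ Vᗮ)
    (hperp : x - (Submodule.orthogonalProjection V x : EuclideanSpace ℂ (Fin n)) ≠ 0)
    (hsin : sinA v (x - (Submodule.orthogonalProjection V x : EuclideanSpace ℂ (Fin n))) ≠ 0) :
    sinV (V ⊔ Submodule.span ℂ {v}) x
      = sinV V x * sinA v (x - (Submodule.orthogonalProjection V x : EuclideanSpace ℂ (Fin n))) :=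
  stmt1_general V x v hvV
end

section
/- Under the hypotheses of the previous statement, if additionally x_{1,⊥} = (I - P_V)x_1 ≠ 0 and v = (I - P_V)Q(σ)^{-1}r ≠ 0, then sin∠(v, x_{1,⊥}) ≤ |λ_1 - σ|/|λ_2 - σ| · ξ / ||x_{1,⊥}||, where ξ = (Σ_{i=2}^{2n} |y_i* r|)/|y_1* r|. In particular when x_{1,⊥} is a unit vector, sin∠(v, x_{1,⊥}) ≤ |λ_1 - σ|/|λ_2 - σ| · ξ. -/
open Finset

theorem sqrt_one_sub_norm_inner_sq_div_le {𝕜 E : Type*} [RCLike 𝕜] [NormedAddCommGroup E]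
    [InnerProductSpace 𝕜 E] (v : E) {w : E} (hw : w ≠ 0) (α : 𝕜) :
    √(1 - ‖(inner 𝕜 v w : 𝕜)‖ ^ 2 / (‖v‖ ^ 2 * ‖w‖ ^ 2)) ≤ ‖α • v - w‖ / ‖w‖ := by
  set P := (𝕜 ∙ v).starProjection
  have hw0 : 0 < ‖w‖ := norm_pos_iff.2 hw
  have hdist : ‖w - P w‖ ≤ ‖α • v - w‖ := by
    rw [norm_sub_rev (α • v), Submodule.starProjection_minimal]
    exact ciInf_le (f := fun x : 𝕜 ∙ v => ‖w - x‖)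
      ⟨0, Set.forall_mem_range.2 fun _ => norm_nonneg _⟩
      ⟨α • v, Submodule.smul_mem _ α (Submodule.mem_span_singleton_self v)⟩
  have hproj : ‖P w‖ = ‖(inner 𝕜 v w : 𝕜)‖ / ‖v‖ := by
    rcases eq_or_ne v 0 with rfl | hv
    · simp [P]
    · have hv0 : ‖v‖ ≠ 0 := norm_ne_zero_iff.2 hv
      rw [Submodule.starProjection_singleton, norm_smul, norm_div, RCLike.norm_ofReal,
        abs_of_nonneg (by positivity)]
      field_simp
  have hpyth : ‖w‖ ^ 2 = ‖P w‖ ^ 2 + ‖w - P w‖ ^ 2 := by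
    rw [← Submodule.starProjection_orthogonal_val]
    exact Submodule.norm_sq_eq_add_norm_sq_starProjection w _
  have hsin : 1 - ‖(inner 𝕜 v w : 𝕜)‖ ^ 2 / (‖v‖ ^ 2 * ‖w‖ ^ 2) = (‖w - P w‖ / ‖w‖) ^ 2 := by
    have hratio : ‖(inner 𝕜 v w : 𝕜)‖ ^ 2 / (‖v‖ ^ 2 * ‖w‖ ^ 2) = ‖P w‖ ^ 2 / ‖w‖ ^ 2 := by
      rw [hproj, div_pow, div_div]
    rw [hratio]
    field_simp
    linarith
  rw [hsin, Real.sqrt_sq (by positivity)]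
  gcongr

theorem sinA_le_norm_smul_sub_div {n : ℕ} (v : EuclideanSpace ℂ (Fin n))
    {w : EuclideanSpace ℂ (Fin n)} (hw : w ≠ 0) (α : ℂ) :
    sinA v w ≤ ‖α • v - w‖ / ‖w‖ :=
  sqrt_one_sub_norm_inner_sq_div_le v hw α

theorem norm_inv_smul_sum_smul_sub_le {ι 𝕜 E : Type*} [Fintype ι] [DecidableEq ι]
    [NormedField 𝕜] [SeminormedAddCommGroup E] [NormedSpace 𝕜 E] (c : ι → 𝕜) {z : ι → E}
    (hz : ∀ i, ‖z i‖ ≤ 1) {j : ι} (hj : c j ≠ 0) :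
    ‖(c j)⁻¹ • ∑ i, c i • z i - z j‖ ≤ ∑ i ∈ univ.erase j, ‖c i / c j‖ := by
  have htail : (c j)⁻¹ • ∑ i, c i • z i - z j = ∑ i ∈ univ.erase j, (c i / c j) • z i := by
    rw [← add_sum_erase _ _ (mem_univ j), smul_add, smul_smul, inv_mul_cancel₀ hj, one_smul,
      add_sub_cancel_left, smul_sum]
    simp only [smul_smul, inv_mul_eq_div]
  rw [htail]
  refine (norm_sum_le _ _).trans (sum_le_sum fun i _ => ?_)
  rw [norm_smul]
  exact mul_le_of_le_one_right (norm_nonneg _) (hz i)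

theorem norm_div_div_div_le {𝕜 : Type*} [NormedField 𝕜] (b b₁ a a₁ a₂ : 𝕜)
    (ha₂ : 0 < ‖a₂‖) (ha : ‖a₂‖ ≤ ‖a‖) :
    ‖(b / a) / (b₁ / a₁)‖ ≤ ‖a₁‖ / ‖a₂‖ * (‖b‖ / ‖b₁‖) := by
  calc ‖(b / a) / (b₁ / a₁)‖ = ‖a₁‖ / ‖a‖ * (‖b‖ / ‖b₁‖) := by
        rw [norm_div, norm_div, norm_div, div_div_eq_mul_div]
        ring
    _ ≤ ‖a₁‖ / ‖a₂‖ * (‖b‖ / ‖b₁‖) := by gcongr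

theorem stmt5_general {n : ℕ} (lam : Fin (2 * n) → ℂ)
    (x y : Fin (2 * n) → EuclideanSpace ℂ (Fin n)) (σ : ℂ)
    (r u : EuclideanSpace ℂ (Fin n)) (V : Submodule ℂ (EuclideanSpace ℂ (Fin n)))
    (i1 i2 : Fin (2 * n))
    (hxnorm : ∀ i, ‖x i‖ = 1)
    (hσ : ∀ i, σ ≠ lam i)
    (hy1 : (inner ℂ (y i1) r : ℂ) ≠ 0)
    (hu : u = ∑ i, ((inner ℂ (y i) r : ℂ) / (σ - lam i)) • x i)
    (hmax : ∀ i, i ≠ i1 → ‖lam i2 - σ‖ ≤ ‖lam i - σ‖)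
    (v x1perp : EuclideanSpace ℂ (Fin n))
    (hv : v = u - (V.orthogonalProjectionOnto u : EuclideanSpace ℂ (Fin n)))
    (hx1perp : x1perp = x i1 - (V.orthogonalProjectionOnto (x i1) : EuclideanSpace ℂ (Fin n)))
    (hx1perp0 : x1perp ≠ 0) :
    sinA v x1perp
        ≤ ‖lam i1 - σ‖ / ‖lam i2 - σ‖ *
            ((∑ i ∈ Finset.univ.erase i1, ‖(inner ℂ (y i) r : ℂ)‖) /
              ‖(inner ℂ (y i1) r : ℂ)‖) / ‖x1perp‖ ∧
      (‖x1perp‖ = 1 →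
        sinA v x1perp
          ≤ ‖lam i1 - σ‖ / ‖lam i2 - σ‖ *
              ((∑ i ∈ Finset.univ.erase i1, ‖(inner ℂ (y i) r : ℂ)‖) /
                ‖(inner ℂ (y i1) r : ℂ)‖)) := by
  set P := Vᗮ.starProjection
  set c : Fin (2 * n) → ℂ := fun i => (inner ℂ (y i) r : ℂ) / (σ - lam i)
  have hc1 : c i1 ≠ 0 := div_ne_zero hy1 (sub_ne_zero.2 (hσ i1))
  have hv' : v = ∑ i, c i • P (x i) := by
    rw [hv, Submodule.coe_orthogonalProjectionOnto_apply,
      ← Submodule.starProjection_orthogonal_val, hu, map_sum]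
    simp only [map_smul, P, c]
  have hx1' : x1perp = P (x i1) := by
    rw [hx1perp, Submodule.coe_orthogonalProjectionOnto_apply,
      Submodule.starProjection_orthogonal_val]
  have hresidual : ‖(c i1)⁻¹ • v - x1perp‖ ≤ ‖lam i1 - σ‖ / ‖lam i2 - σ‖ *
      ((∑ i ∈ univ.erase i1, ‖(inner ℂ (y i) r : ℂ)‖) / ‖(inner ℂ (y i1) r : ℂ)‖) := by
    rw [hv', hx1', sum_div, mul_sum]
    refine (norm_inv_smul_sum_smul_sub_le c (fun i => ?_) hc1).trans (sum_le_sum fun i hi => ?_)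
    · exact (Submodule.norm_starProjection_apply_le _ _).trans (hxnorm i).le
    · have hclosest := hmax i (ne_of_mem_erase hi)
      rw [norm_sub_rev (lam i2), norm_sub_rev (lam i)] at hclosest
      rw [norm_sub_rev (lam i1), norm_sub_rev (lam i2)]
      exact norm_div_div_div_le _ _ _ _ _ (norm_pos_iff.2 (sub_ne_zero.2 (hσ i2))) hclosest
  have hsin := (sinA_le_norm_smul_sub_div v hx1perp0 (c i1)⁻¹).trans
    (div_le_div_of_nonneg_right hresidual (norm_nonneg _))
  exact ⟨hsin, fun h => by rwa [h, div_one] at hsin⟩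

/-- Under the hypotheses of Theorem 2, with `v = (I - P_V)u ≠ 0` and
`x_{1,⊥} = (I - P_V)x₁ ≠ 0`, the sine of the angle between the expansion direction
and `x_{1,⊥}` is bounded by `|λ₁-σ|/|λ₂-σ| · ξ / ‖x_{1,⊥}‖`, and by
`|λ₁-σ|/|λ₂-σ| · ξ` when `x_{1,⊥}` is a unit vector. -/
theorem stmt5 {n : ℕ} (lam : Fin (2 * n) → ℂ)
    (x y : Fin (2 * n) → EuclideanSpace ℂ (Fin n)) (σ : ℂ)
    (r u : EuclideanSpace ℂ (Fin n)) (V : Submodule ℂ (EuclideanSpace ℂ (Fin n)))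
    (i1 i2 : Fin (2 * n)) (hne : i2 ≠ i1)
    (hxnorm : ∀ i, ‖x i‖ = 1)
    (hσ : ∀ i, σ ≠ lam i)
    (hy1 : (inner ℂ (y i1) r : ℂ) ≠ 0)
    (hu : u = ∑ i, ((inner ℂ (y i) r : ℂ) / (σ - lam i)) • x i)
    (hmax : ∀ i, i ≠ i1 → ‖lam i2 - σ‖ ≤ ‖lam i - σ‖)
    (v x1perp : EuclideanSpace ℂ (Fin n))
    (hv : v = u - (V.orthogonalProjectionOnto u : EuclideanSpace ℂ (Fin n)))
    (hx1perp : x1perp = x i1 - (V.orthogonalProjectionOnto (x i1) : EuclideanSpace ℂ (Fin n)))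
    (hv0 : v ≠ 0) (hx1perp0 : x1perp ≠ 0) :
    sinA v x1perp
        ≤ ‖lam i1 - σ‖ / ‖lam i2 - σ‖ *
            ((∑ i ∈ Finset.univ.erase i1, ‖(inner ℂ (y i) r : ℂ)‖) /
              ‖(inner ℂ (y i1) r : ℂ)‖) / ‖x1perp‖ ∧
      (‖x1perp‖ = 1 →
        sinA v x1perp
          ≤ ‖lam i1 - σ‖ / ‖lam i2 - σ‖ *
              ((∑ i ∈ Finset.univ.erase i1, ‖(inner ℂ (y i) r : ℂ)‖) /
                ‖(inner ℂ (y i1) r : ℂ)‖)) :=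
  stmt5_general lam x y σ r u V i1 i2 hxnorm hσ hy1 hu hmax v x1perp hv hx1perp hx1perp0
end

section
/- Let V be a subspace of C^n, v and ṽ unit vectors orthogonal to V, x a nonzero vector with x_⊥ = (I - P_V)x ≠ 0. If sin∠(ṽ, x_⊥) < 1, then for the expanded subspace V' = V + span{ṽ} one has sin∠(V', x) < sin∠(V, x), provided sin∠(V, x) > 0. -/
/-!
For `V ≤ V'` the residual splits orthogonally as `x - P_V x = (x - P_V' x) + (P_V' x - P_V x)`,
so the distance from `x` drops strictly as soon as `P_V' x ≠ P_V x`, that is, as soon as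
`x_⊥ = x - P_V x` is not orthogonal to `V'`. For `V' = V ⊔ span {ṽ}` this is witnessed by
`⟪ṽ, x_⊥⟫ ≠ 0`, which is what `sin∠(ṽ, x_⊥) < 1` says.
-/

open Submodule

theorem Submodule.norm_sub_starProjection_lt_of_le {𝕜 E : Type*} [RCLike 𝕜]
    [NormedAddCommGroup E] [InnerProductSpace 𝕜 E] {K L : Submodule 𝕜 E}
    [K.HasOrthogonalProjection] [L.HasOrthogonalProjection] (hKL : K ≤ L) {x w : E}
    (hw : w ∈ L) (hxw : inner 𝕜 w (x - K.starProjection x) ≠ 0) :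
    ‖x - L.starProjection x‖ < ‖x - K.starProjection x‖ := by
  have hne : L.starProjection x - K.starProjection x ≠ 0 := by
    rw [sub_ne_zero]
    intro h
    rw [← h] at hxw
    exact hxw (inner_right_of_mem_orthogonal hw (L.sub_starProjection_mem_orthogonal x))
  have hortho : inner 𝕜 (x - L.starProjection x) (L.starProjection x - K.starProjection x) = 0 :=
    inner_left_of_mem_orthogonal
      (L.sub_mem (L.starProjection_apply_mem x) (hKL (K.starProjection_apply_mem x)))
      (L.sub_starProjection_mem_orthogonal x)
  have hpyth := norm_add_sq_eq_norm_sq_add_norm_sq_of_inner_eq_zero _ _ hortho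
  rw [sub_add_sub_cancel] at hpyth
  have : 0 < ‖L.starProjection x - K.starProjection x‖ ^ 2 := by positivity
  exact lt_of_pow_lt_pow_left₀ 2 (norm_nonneg _) (by linarith)

theorem inner_ne_zero_of_sinA_lt_one {n : ℕ} {u w : EuclideanSpace ℂ (Fin n)}
    (h : sinA u w < 1) : inner ℂ u w ≠ 0 := by
  intro h0
  simp [sinA, h0] at h

theorem stmt10_general {n : ℕ} (V : Submodule ℂ (EuclideanSpace ℂ (Fin n)))
    (x vt : EuclideanSpace ℂ (Fin n)) (hx : x ≠ 0)
    (hsin : sinA vt (x - (Submodule.orthogonalProjection V x : EuclideanSpace ℂ (Fin n))) < 1) :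
    sinV (V ⊔ Submodule.span ℂ {vt}) x < sinV V x := by
  have hdist := norm_sub_starProjection_lt_of_le le_sup_left
    (mem_sup_right (mem_span_singleton_self vt)) (inner_ne_zero_of_sinA_lt_one hsin)
  simp only [sinV, coe_orthogonalProjectionOnto_apply]
  gcongr

/-- One step of subspace expansion with an (inexact) direction `ṽ` strictly
decreases the angle to the desired eigenvector `x` iff `sin∠(ṽ, x⊥) < 1`. -/
theorem stmt10 {n : ℕ} (V : Submodule ℂ (EuclideanSpace ℂ (Fin n)))
    (x vt : EuclideanSpace ℂ (Fin n)) (hx : x ≠ 0)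
    (hvt : ‖vt‖ = 1) (hvtV : vt ∈ Vᗮ)
    (hperp : x - (Submodule.orthogonalProjection V x : EuclideanSpace ℂ (Fin n)) ≠ 0)
    (hsin : sinA vt (x - (Submodule.orthogonalProjection V x : EuclideanSpace ℂ (Fin n))) < 1)
    (hpos : 0 < sinV V x) :
    sinV (V ⊔ Submodule.span ℂ {vt}) x < sinV V x :=
  stmt10_general V x vt hx hsin
end

section
/- Let V be a subspace of C^n with projector P_V, u a vector with (I - P_V)u ≠ 0, and ũ a vector with (I - P_V)ũ ≠ 0. Define v = (I-P_V)u/||(I-P_V)u||, ṽ = (I-P_V)ũ/||(I-P_V)ũ||, ε̃ = ||(I-P_V)(ũ - u)||/||(I-P_V)u||, and f_⊥ = (I-P_V)(ũ - u) (assumed nonzero). Then sin∠(ṽ, v) ≤ ε̃ · sin∠(ṽ, f_⊥), i.e., the angular perturbation of the normalized expansion direction is bounded by ε̃ times the sine of the angle between ṽ and the projected error direction. -/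
section GramDet

variable (𝕜 : Type*) {E : Type*} [RCLike 𝕜] [NormedAddCommGroup E] [InnerProductSpace 𝕜 E]

def gramDet (x y : E) : ℝ := ‖x‖ ^ 2 * ‖y‖ ^ 2 - ‖(inner 𝕜 x y : 𝕜)‖ ^ 2

variable {𝕜}

theorem gramDet_sub_right_self (x y : E) : gramDet 𝕜 x (x - y) = gramDet 𝕜 x y := by
  have hnorm : ‖x - y‖ ^ 2 = ‖x‖ ^ 2 - 2 * RCLike.re (inner 𝕜 x y : 𝕜) + ‖y‖ ^ 2 :=
    norm_sub_sq x y
  have hinner : (inner 𝕜 x (x - y) : 𝕜) = ((‖x‖ ^ 2 : ℝ) : 𝕜) - inner 𝕜 x y := by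
    rw [inner_sub_right, inner_self_eq_norm_sq_to_K, RCLike.ofReal_pow]
  simp only [gramDet, hnorm, hinner, RCLike.norm_sq_eq_def, map_sub, RCLike.ofReal_re,
    RCLike.ofReal_im]
  ring

end GramDet

section SinA

variable {n : ℕ}

theorem sinA_smul_left {c : ℂ} (hc : c ≠ 0) (x y : EuclideanSpace ℂ (Fin n)) :
    sinA (c • x) y = sinA x y := by
  have hc' : ‖c‖ ≠ 0 := norm_ne_zero_iff.2 hc
  unfold sinA
  rw [inner_smul_left, norm_mul, Complex.norm_conj, norm_smul]
  congr 2
  rw [mul_pow, mul_pow, mul_assoc, mul_div_mul_left _ _ (pow_ne_zero 2 hc')]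

theorem sinA_smul_right {c : ℂ} (hc : c ≠ 0) (x y : EuclideanSpace ℂ (Fin n)) :
    sinA x (c • y) = sinA x y := by
  have hc' : ‖c‖ ≠ 0 := norm_ne_zero_iff.2 hc
  unfold sinA
  rw [inner_smul_right, norm_mul, norm_smul]
  congr 2
  rw [mul_pow, mul_pow, mul_left_comm (‖x‖ ^ 2), mul_div_mul_left _ _ (pow_ne_zero 2 hc')]

theorem sinA_inv_norm_smul_left (x y : EuclideanSpace ℂ (Fin n)) :
    sinA (‖x‖⁻¹ • x) y = sinA x y := by
  rcases eq_or_ne x 0 with rfl | hx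
  · rw [smul_zero]
  · rw [RCLike.real_smul_eq_coe_smul (K := ℂ)]
    exact sinA_smul_left (by simpa using hx) x y

theorem sinA_inv_norm_smul_right (x y : EuclideanSpace ℂ (Fin n)) :
    sinA x (‖y‖⁻¹ • y) = sinA x y := by
  rcases eq_or_ne y 0 with rfl | hy
  · rw [smul_zero]
  · rw [RCLike.real_smul_eq_coe_smul (K := ℂ)]
    exact sinA_smul_right (by simpa using hy) x y

theorem norm_mul_sinA_eq_sqrt_gramDet_div {x : EuclideanSpace ℂ (Fin n)} (hx : x ≠ 0)
    (y : EuclideanSpace ℂ (Fin n)) : ‖y‖ * sinA x y = √(gramDet ℂ x y) / ‖x‖ := by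
  rcases eq_or_ne y 0 with rfl | hy
  · simp [gramDet]
  have hx' : ‖x‖ ≠ 0 := norm_ne_zero_iff.2 hx
  have hy' : ‖y‖ ≠ 0 := norm_ne_zero_iff.2 hy
  rw [sinA, ← Real.sqrt_sq (norm_nonneg y), ← Real.sqrt_mul (sq_nonneg _),
    ← Real.sqrt_sq (norm_nonneg x), ← Real.sqrt_div' _ (sq_nonneg _), Real.sqrt_sq (norm_nonneg x),
    Real.sqrt_sq (norm_nonneg y), gramDet]
  congr 1
  field_simp

theorem norm_sub_mul_sinA_sub_self (x y : EuclideanSpace ℂ (Fin n)) :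
    ‖x - y‖ * sinA x (x - y) = ‖y‖ * sinA x y := by
  rcases eq_or_ne x 0 with rfl | hx
  · simp [sinA]
  rw [norm_mul_sinA_eq_sqrt_gramDet_div hx, norm_mul_sinA_eq_sqrt_gramDet_div hx,
    gramDet_sub_right_self]

end SinA

theorem stmt13_general {n : ℕ} (V : Submodule ℂ (EuclideanSpace ℂ (Fin n)))
    (u ut : EuclideanSpace ℂ (Fin n))
    (hu : u - (Submodule.orthogonalProjectionOnto V u : EuclideanSpace ℂ (Fin n)) ≠ 0)
    (v vt fperp : EuclideanSpace ℂ (Fin n)) (εt : ℝ)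
    (hv : v = ‖u - (Submodule.orthogonalProjectionOnto V u : EuclideanSpace ℂ (Fin n))‖⁻¹ •
        (u - (Submodule.orthogonalProjectionOnto V u : EuclideanSpace ℂ (Fin n))))
    (hvt : vt = ‖ut - (Submodule.orthogonalProjectionOnto V ut : EuclideanSpace ℂ (Fin n))‖⁻¹ •
        (ut - (Submodule.orthogonalProjectionOnto V ut : EuclideanSpace ℂ (Fin n))))
    (hfperp : fperp = (ut - u) -
        (Submodule.orthogonalProjectionOnto V (ut - u) : EuclideanSpace ℂ (Fin n)))
    (hεt : εt = ‖fperp‖ / ‖u - (Submodule.orthogonalProjectionOnto V u : EuclideanSpace ℂ (Fin n))‖) :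
    sinA vt v ≤ εt * sinA vt fperp := by
  set a := u - (Submodule.orthogonalProjectionOnto V u : EuclideanSpace ℂ (Fin n))
  set b := ut - (Submodule.orthogonalProjectionOnto V ut : EuclideanSpace ℂ (Fin n))
  have hab : a = b - fperp := by
    rw [hfperp, map_sub, Submodule.coe_sub]
    simp only [a, b]
    abel
  have ha : ‖a‖ ≠ 0 := norm_ne_zero_iff.2 hu
  refine le_of_eq ?_
  calc sinA vt v = sinA b a := by rw [hvt, hv, sinA_inv_norm_smul_left, sinA_inv_norm_smul_right]
    _ = εt * sinA b fperp := by
      rw [hεt, div_mul_eq_mul_div, eq_div_iff ha, mul_comm, hab, norm_sub_mul_sinA_sub_self]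
    _ = εt * sinA vt fperp := by rw [hvt, sinA_inv_norm_smul_left]

/-- The angular perturbation of the normalized expansion direction is bounded by
`ε̃ · sin∠(ṽ, f⊥)`. -/
theorem stmt13 {n : ℕ} (V : Submodule ℂ (EuclideanSpace ℂ (Fin n)))
    (u ut : EuclideanSpace ℂ (Fin n))
    (hu : u - (Submodule.orthogonalProjectionOnto V u : EuclideanSpace ℂ (Fin n)) ≠ 0)
    (hut : ut - (Submodule.orthogonalProjectionOnto V ut : EuclideanSpace ℂ (Fin n)) ≠ 0)
    (v vt fperp : EuclideanSpace ℂ (Fin n)) (εt : ℝ)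
    (hv : v = ‖u - (Submodule.orthogonalProjectionOnto V u : EuclideanSpace ℂ (Fin n))‖⁻¹ •
        (u - (Submodule.orthogonalProjectionOnto V u : EuclideanSpace ℂ (Fin n))))
    (hvt : vt = ‖ut - (Submodule.orthogonalProjectionOnto V ut : EuclideanSpace ℂ (Fin n))‖⁻¹ •
        (ut - (Submodule.orthogonalProjectionOnto V ut : EuclideanSpace ℂ (Fin n))))
    (hfperp : fperp = (ut - u) -
        (Submodule.orthogonalProjectionOnto V (ut - u) : EuclideanSpace ℂ (Fin n)))
    (hfne : fperp ≠ 0)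
    (hεt : εt = ‖fperp‖ / ‖u - (Submodule.orthogonalProjectionOnto V u : EuclideanSpace ℂ (Fin n))‖) :
    sinA vt v ≤ εt * sinA vt fperp :=
  stmt13_general V u ut hu v vt fperp εt hv hvt hfperp hεt
end
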